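/- Let Y be a nonempty finite type, let π_ref be a probability mass function on Y with full support, let f : Y → ℝ be a reward-quality function, let γ > 0, β > 0, and let R_max and R₀ be real numbers with R₀ < R_max. Define the reward r(y) = −γ·(f(y) − R_max)², the objective J(π) = Σ_y π(y)·r(y) − β·Σ_y π(y)·log(π(y)/π_ref(y)), and the two Gibbs policies π_good(y) = π_ref(y)·exp(−γ·(f(y) − R_max)²/β)/Z_good and π_bad(y) = π_ref(y)·exp(−γ·(f(y) − R₀)²/β)/Z_bad, where Z_good and Z_bad are the corresponding normalizing constants. If π_good ≠ π_bad, then J(π_good) > J(π_bad); that is, there is a strict quality gap between the good policy and the bad policy. -/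

import Mathlib

/-!
Dividing by `β`, the objective is `β` times the free energy `F_u(π) = Σ π u − KL(π ‖ π_ref)` with
`u = r / β`. Against the Gibbs policy `g ∝ π_ref · exp u` with partition function `Z` one has
`F_u(π) = log Z − KL(π ‖ g)` for every probability vector `π`, so by Gibbs' inequality `g` is the
unique maximiser of `F_u`. Since `π_good` is exactly this `g` and `π_bad` is a probability vector
different from it, `J(π_bad) < J(π_good)`.
-/

open Finset
open Real (exp log exp_pos log_div log_mul log_exp)
open InformationTheory (klFun klFun_apply klFun_nonneg klFun_eq_zero_iff)

section Gibbs

variable {Y : Type*} [Fintype Y]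

lemma sum_mul_log_div_pos {p q : Y → ℝ} (hp : ∀ y, 0 ≤ p y) (hq : ∀ y, 0 < q y)
    (hsum : ∑ y, p y = ∑ y, q y) (hne : p ≠ q) : 0 < ∑ y, p y * log (p y / q y) := by
  have hpoint : ∀ y, p y * log (p y / q y) =
      q y * klFun (p y / q y) + (p y - q y) := fun y => by
    rw [klFun_apply]
    field_simp [(hq y).ne']
    ring
  have hratio : ∀ y, 0 ≤ p y / q y := fun y => div_nonneg (hp y) (hq y).le
  have hkl_nonneg : ∀ y, 0 ≤ q y * klFun (p y / q y) := fun y =>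
    mul_nonneg (hq y).le (klFun_nonneg (hratio y))
  obtain ⟨y₀, hy₀⟩ : ∃ y, p y ≠ q y := Function.ne_iff.mp hne
  have hkl_pos : 0 < q y₀ * klFun (p y₀ / q y₀) := by
    refine mul_pos (hq y₀) ((klFun_nonneg (hratio y₀)).lt_of_ne' ?_)
    rwa [Ne, klFun_eq_zero_iff (hratio y₀), div_eq_one_iff_eq (hq y₀).ne']
  rw [sum_congr rfl fun y _ => hpoint y, sum_add_distrib, sum_sub_distrib, hsum, sub_self,
    add_zero]
  exact sum_pos' (fun y _ => hkl_nonneg y) ⟨y₀, mem_univ y₀, hkl_pos⟩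

noncomputable def partitionFn (ρ u : Y → ℝ) : ℝ := ∑ y, ρ y * exp (u y)

noncomputable def gibbsPolicy (ρ u : Y → ℝ) (y : Y) : ℝ := ρ y * exp (u y) / partitionFn ρ u

noncomputable def freeEnergy (ρ u π : Y → ℝ) : ℝ :=
  ∑ y, π y * u y - ∑ y, π y * log (π y / ρ y)

variable {ρ : Y → ℝ} (u : Y → ℝ)

lemma partitionFn_pos [Nonempty Y] (hρ : ∀ y, 0 < ρ y) : 0 < partitionFn ρ u :=
  sum_pos (fun y _ => mul_pos (hρ y) (exp_pos _)) univ_nonempty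

lemma gibbsPolicy_pos [Nonempty Y] (hρ : ∀ y, 0 < ρ y) (y : Y) : 0 < gibbsPolicy ρ u y :=
  div_pos (mul_pos (hρ y) (exp_pos _)) (partitionFn_pos u hρ)

lemma sum_gibbsPolicy [Nonempty Y] (hρ : ∀ y, 0 < ρ y) : ∑ y, gibbsPolicy ρ u y = 1 := by
  simp only [gibbsPolicy]
  rw [← sum_div, ← partitionFn, div_self (partitionFn_pos u hρ).ne']

lemma log_gibbsPolicy [Nonempty Y] (hρ : ∀ y, 0 < ρ y) (y : Y) :
    log (gibbsPolicy ρ u y) = log (ρ y) + u y - log (partitionFn ρ u) := by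
  rw [gibbsPolicy, log_div (mul_pos (hρ y) (exp_pos _)).ne' (partitionFn_pos u hρ).ne',
    log_mul (hρ y).ne' (exp_pos _).ne', log_exp]

lemma freeEnergy_eq_log_partitionFn_sub [Nonempty Y] (hρ : ∀ y, 0 < ρ y) {π : Y → ℝ}
    (hπsum : ∑ y, π y = 1) :
    freeEnergy ρ u π =
      log (partitionFn ρ u) - ∑ y, π y * log (π y / gibbsPolicy ρ u y) := by
  have hpoint : ∀ y, π y * log (π y / gibbsPolicy ρ u y) =
      π y * log (π y / ρ y) - π y * u y + π y * log (partitionFn ρ u) := fun y => by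
    by_cases hπ : π y = 0
    · simp [hπ]
    rw [log_div hπ (gibbsPolicy_pos u hρ y).ne', log_div hπ (hρ y).ne', log_gibbsPolicy u hρ]
    ring
  rw [freeEnergy, sum_congr rfl fun y _ => hpoint y, sum_add_distrib, sum_sub_distrib,
    ← sum_mul, hπsum]
  ring

lemma freeEnergy_gibbsPolicy [Nonempty Y] (hρ : ∀ y, 0 < ρ y) :
    freeEnergy ρ u (gibbsPolicy ρ u) = log (partitionFn ρ u) := by
  rw [freeEnergy_eq_log_partitionFn_sub u hρ (sum_gibbsPolicy u hρ)]
  simp [div_self (gibbsPolicy_pos u hρ _).ne']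

lemma freeEnergy_lt_freeEnergy_gibbsPolicy [Nonempty Y] (hρ : ∀ y, 0 < ρ y) {π : Y → ℝ}
    (hπ : ∀ y, 0 ≤ π y) (hπsum : ∑ y, π y = 1) (hne : π ≠ gibbsPolicy ρ u) :
    freeEnergy ρ u π < freeEnergy ρ u (gibbsPolicy ρ u) := by
  rw [freeEnergy_gibbsPolicy u hρ, freeEnergy_eq_log_partitionFn_sub u hρ hπsum, sub_lt_self_iff]
  exact sum_mul_log_div_pos hπ (gibbsPolicy_pos u hρ) (by rw [hπsum, sum_gibbsPolicy u hρ]) hne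

end Gibbs

theorem quality_gap_strict_general
    {Y : Type*} [Fintype Y] [Nonempty Y]
    (πref : Y → ℝ) (href_pos : ∀ y, 0 < πref y)
    (f : Y → ℝ) (γ β Rmax R₀ : ℝ) (hβ : 0 < β)
    (r : Y → ℝ) (hr : ∀ y, r y = -γ * (f y - Rmax) ^ 2)
    (J : (Y → ℝ) → ℝ)
    (hJ : ∀ π : Y → ℝ,
      J π = ∑ y, π y * r y - β * ∑ y, π y * Real.log (π y / πref y))
    (Zgood : ℝ) (hZgood : Zgood = ∑ y, πref y * Real.exp (-γ * (f y - Rmax) ^ 2 / β))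
    (Zbad : ℝ) (hZbad : Zbad = ∑ y, πref y * Real.exp (-γ * (f y - R₀) ^ 2 / β))
    (πgood : Y → ℝ)
    (hgood : ∀ y, πgood y = πref y * Real.exp (-γ * (f y - Rmax) ^ 2 / β) / Zgood)
    (πbad : Y → ℝ)
    (hbad : ∀ y, πbad y = πref y * Real.exp (-γ * (f y - R₀) ^ 2 / β) / Zbad)
    (hne : πgood ≠ πbad) :
    J πgood > J πbad := by
  have hJ_eq : ∀ π, J π = β * freeEnergy πref (fun y => r y / β) π := fun π => by
    rw [hJ, freeEnergy, mul_sub]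
    congr 1
    rw [mul_sum]
    exact sum_congr rfl fun y _ => by field_simp
  have hgood_eq : πgood = gibbsPolicy πref (fun y => r y / β) := funext fun y => by
    simp only [hgood, hZgood, hr, gibbsPolicy, partitionFn]
  have hbad_eq : πbad = gibbsPolicy πref (fun y => -γ * (f y - R₀) ^ 2 / β) :=
    funext fun y => by simp only [hbad, hZbad, gibbsPolicy, partitionFn]
  have hbad_nonneg : ∀ y, 0 ≤ πbad y := fun y => hbad_eq ▸ (gibbsPolicy_pos _ href_pos y).le
  have hbad_sum : ∑ y, πbad y = 1 := hbad_eq ▸ sum_gibbsPolicy _ href_pos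
  rw [gt_iff_lt, hJ_eq, hJ_eq, hgood_eq]
  exact mul_lt_mul_of_pos_left (freeEnergy_lt_freeEnergy_gibbsPolicy _ href_pos hbad_nonneg
    hbad_sum (hgood_eq ▸ hne.symm)) hβ

/-- Strict-inequality conclusion (Equation 11) of Proposition 1 (Quality gap between
responses): with reward `r(y) = −γ·(f(y) − R_max)²` and objective
`J(π) = Σ_y π(y)·r(y) − β·Σ_y π(y)·log(π(y)/π_ref(y))`, if the Gibbs policies
`π_good` (conditioned on `R_max`) and `π_bad` (conditioned on `R₀ < R_max`) differ,
then `J(π_good) > J(π_bad)`. -/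
theorem quality_gap_strict
    {Y : Type*} [Fintype Y] [Nonempty Y]
    (πref : Y → ℝ) (href_pos : ∀ y, 0 < πref y) (href_sum : ∑ y, πref y = 1)
    (f : Y → ℝ) (γ β Rmax R₀ : ℝ) (hγ : 0 < γ) (hβ : 0 < β) (hR : R₀ < Rmax)
    (r : Y → ℝ) (hr : ∀ y, r y = -γ * (f y - Rmax) ^ 2)
    (J : (Y → ℝ) → ℝ)
    (hJ : ∀ π : Y → ℝ,
      J π = ∑ y, π y * r y - β * ∑ y, π y * Real.log (π y / πref y))
    (Zgood : ℝ) (hZgood : Zgood = ∑ y, πref y * Real.exp (-γ * (f y - Rmax) ^ 2 / β))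
    (Zbad : ℝ) (hZbad : Zbad = ∑ y, πref y * Real.exp (-γ * (f y - R₀) ^ 2 / β))
    (πgood : Y → ℝ)
    (hgood : ∀ y, πgood y = πref y * Real.exp (-γ * (f y - Rmax) ^ 2 / β) / Zgood)
    (πbad : Y → ℝ)
    (hbad : ∀ y, πbad y = πref y * Real.exp (-γ * (f y - R₀) ^ 2 / β) / Zbad)
    (hne : πgood ≠ πbad) :
    J πgood > J πbad :=
  quality_gap_strict_general πref href_pos f γ β Rmax R₀ hβ r hr J hJ Zgood hZgood Zbad hZbad πgood
    hgood πbad hbad hne
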